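/- Let q ∈ [1,∞) and A = (α₀, α_∞) ∈ ℝ² with qα_∞ = −1 and qα₀ < −1. Then there is a constant C > 0 such that for every measurable function f on (0,∞) and every t ≥ 1: ℓℓ(t) · f^*(t)^q ≤ C ∫_0^∞ s^{−1} ℓ^{A}(s)^{q} f^*(s)^q ds, i.e. ℓℓ(t) f^*(t)^q ≤ C ‖f‖_{L^{∞,q,A}(0,∞)}^q. -/

import Mathlib

open MeasureTheory Set Filter Topology
open scoped ENNReal NNReal

noncomputable section

/-- The nonincreasing rearrangement of an `ℝ≥0∞`-valued function with respect to `μ`: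
`f^*(t) = inf {λ : μ({f > λ}) ≤ t}`. -/
def rearr {α : Type*} [MeasurableSpace α] (μ : Measure α) (f : α → ℝ≥0∞) (t : ℝ) : ℝ≥0∞ :=
  sInf {l : ℝ≥0∞ | μ {x | l < f x} ≤ ENNReal.ofReal t}

/-- Lebesgue measure on `(0,∞)`. -/
def μI : Measure ℝ := volume.restrict (Set.Ioi (0 : ℝ))

/-- `ℓ(t) = 1 + |log t|`. -/
def ell (t : ℝ) : ℝ := 1 + |Real.log t|

/-- The broken-logarithm power `ℓ^A(t)`, equal to `ℓ(t)^{α₀}` for `t ≤ 1` and to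
`ℓ(t)^{α_∞}` for `t > 1`, where `A = (α₀, α_∞)`. -/
def ellA (A : ℝ × ℝ) (t : ℝ) : ℝ := if t ≤ 1 then ell t ^ A.1 else ell t ^ A.2

/-- The `L^q(0,∞)` norm (with `q ∈ [1,∞]`) of a nonnegative function. -/
def lqNorm (q : ℝ≥0∞) (g : ℝ → ℝ≥0∞) : ℝ≥0∞ :=
  if q = ∞ then essSup g μI
  else (∫⁻ t in Set.Ioi (0 : ℝ), g t ^ q.toReal) ^ q.toReal⁻¹

/-- The Lorentz–Zygmund functional
`‖f‖_{L^{p,q,A}(0,∞)} = ‖ t^{1/p - 1/q} ℓ^A(t) f^*(t) ‖_{L^q(0,∞)}`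
(with the conventions `1/∞ = 0`). -/
def lzNorm (p q : ℝ≥0∞) (A : ℝ × ℝ) (f : ℝ → ℝ≥0∞) : ℝ≥0∞ :=
  lqNorm q fun t => ENNReal.ofReal (t ^ (p.toReal⁻¹ - q.toReal⁻¹) * ellA A t) * rearr μI f t

/-- Admissibility of Lorentz–Zygmund parameters: the functional `‖·‖_{L^{p,q,A}}` is
equivalent to a rearrangement-invariant norm. -/
def LZAdmissible (p q : ℝ≥0∞) (A : ℝ × ℝ) : Prop :=
  (p = 1 ∧ q = 1 ∧ 0 ≤ A.1 ∧ A.2 ≤ 0) ∨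
  (1 < p ∧ p < ∞ ∧ 1 ≤ q) ∨
  (p = ∞ ∧ 1 ≤ q ∧ q < ∞ ∧ A.1 + q.toReal⁻¹ < 0) ∨
  (p = ∞ ∧ q = ∞ ∧ A.1 ≤ 0)

/-- `ℓℓ(t) = 1 + log ℓ(t)`. -/
def elll (t : ℝ) : ℝ := 1 + Real.log (ell t)

/-!
Since `f^*` is nonincreasing, the right-hand side dominates `f^*(t)^q ∫_S s⁻¹ ℓ^A(s)^q ds` for
every `S ⊆ (0, t]`. On `(1, t)` the weight is exactly `1 / (s (1 + log s))`, whose integral is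
`log (1 + log t) = ℓℓ(t) - 1`; on `(1/2, 1)` it is bounded below by `2^{-|qα₀|}`, which pays for
the remaining `1`.
-/

lemma rearr_antitone {α : Type*} [MeasurableSpace α] (μ : Measure α) (f : α → ℝ≥0∞) :
    Antitone (rearr μ f) := fun _ _ hst =>
  sInf_le_sInf fun _ hl => hl.trans (ENNReal.ofReal_le_ofReal hst)

lemma ell_of_one_le {s : ℝ} (hs : 1 ≤ s) : ell s = 1 + Real.log s := by
  rw [ell, abs_of_nonneg (Real.log_nonneg hs)]

lemma one_le_ell (s : ℝ) : 1 ≤ ell s := le_add_of_nonneg_right (abs_nonneg _)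

lemma ell_le_two {s : ℝ} (hs₀ : 1 / 2 ≤ s) (hs₁ : s ≤ 1) : ell s ≤ 2 := by
  have hs : 0 < s := by linarith
  have hlog : -Real.log s ≤ 1 := by
    rw [← Real.log_inv]
    linarith [Real.log_le_sub_one_of_pos (inv_pos.2 hs), (inv_le_comm₀ hs two_pos).2 (by linarith)]
  rw [ell, abs_of_nonpos (Real.log_nonpos hs.le hs₁)]
  linarith

lemma two_rpow_neg_abs_le_rpow {y : ℝ} (hy₁ : 1 ≤ y) (hy₂ : y ≤ 2) (x : ℝ) :
    (2 : ℝ) ^ (-|x|) ≤ y ^ x :=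
  calc (2 : ℝ) ^ (-|x|) ≤ y ^ (-|x|) :=
        Real.rpow_le_rpow_of_nonpos (by linarith) hy₂ (neg_nonpos.2 (abs_nonneg x))
    _ ≤ y ^ x := Real.rpow_le_rpow_of_exponent_le hy₁ (neg_abs_le x)

lemma ellA_rpow_of_le_one (A : ℝ × ℝ) (q : ℝ) {s : ℝ} (hs : s ≤ 1) :
    ellA A s ^ q = ell s ^ (A.1 * q) := by
  rw [ellA, if_pos hs, ← Real.rpow_mul (by linarith [one_le_ell s])]

lemma ellA_rpow_of_one_lt {A : ℝ × ℝ} {q : ℝ} (hA : q * A.2 = -1) {s : ℝ} (hs : 1 < s) :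
    ellA A s ^ q = (1 + Real.log s)⁻¹ := by
  rw [ellA, if_neg (not_le.2 hs), ← Real.rpow_mul (by linarith [one_le_ell s]), mul_comm, hA,
    Real.rpow_neg_one, ell_of_one_le hs.le]

lemma lintegral_Ioo_inv_mul_inv_one_add_log {t : ℝ} (ht : 1 ≤ t) :
    ∫⁻ s in Ioo 1 t, ENNReal.ofReal (s⁻¹ * (1 + Real.log s)⁻¹) =
      ENNReal.ofReal (Real.log (1 + Real.log t)) := by
  have hpos : ∀ x ∈ Icc 1 t, 0 < x ∧ 0 < 1 + Real.log x := fun x hx =>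
    ⟨by linarith [hx.1], by linarith [Real.log_nonneg hx.1]⟩
  have hcont : ContinuousOn (fun s : ℝ => s⁻¹ * (1 + Real.log s)⁻¹) (Icc 1 t) := fun x hx =>
    ((continuousAt_inv₀ (hpos x hx).1.ne').mul ((continuousAt_const.add
      (Real.continuousAt_log (hpos x hx).1.ne')).inv₀ (hpos x hx).2.ne')).continuousWithinAt
  have hderiv : ∀ x ∈ uIcc 1 t,
      HasDerivAt (fun s => Real.log (1 + Real.log s)) (x⁻¹ * (1 + Real.log x)⁻¹) x := by
    intro x hx
    rw [uIcc_of_le ht] at hx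
    rw [mul_comm]
    exact (Real.hasDerivAt_log (hpos x hx).2.ne').comp x
      ((Real.hasDerivAt_log (hpos x hx).1.ne').const_add 1)
  have hftc := intervalIntegral.integral_eq_sub_of_hasDerivAt hderiv
    ((uIcc_of_le ht).symm ▸ hcont).intervalIntegrable
  have hnonneg : 0 ≤ᵐ[volume.restrict (Ioo 1 t)] fun s : ℝ => s⁻¹ * (1 + Real.log s)⁻¹ := by
    refine (ae_restrict_iff' measurableSet_Ioo).2 (ae_of_all _ fun s hs => ?_)
    have := hpos s (Ioo_subset_Icc_self hs)
    exact mul_nonneg (inv_nonneg.2 this.1.le) (inv_nonneg.2 this.2.le)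
  rw [← ofReal_integral_eq_lintegral_ofReal (hcont.integrableOn_Icc.mono_set Ioo_subset_Icc_self)
    hnonneg, ← integral_Ioc_eq_integral_Ioo, ← intervalIntegral.integral_of_le ht, hftc]
  simp

lemma setLIntegral_mul_le_of_antitone {α : Type*} [MeasurableSpace α] [Preorder α]
    {μ : Measure α} {w g : α → ℝ≥0∞} (hg : Antitone g) {S T : Set α} (hS : MeasurableSet S)
    (hST : S ⊆ T) {t : α} (hSt : ∀ s ∈ S, s ≤ t) :
    (∫⁻ s in S, w s ∂μ) * g t ≤ ∫⁻ s in T, w s * g s ∂μ :=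
  calc (∫⁻ s in S, w s ∂μ) * g t ≤ ∫⁻ s in S, w s * g t ∂μ := lintegral_mul_const_le _ _
    _ ≤ ∫⁻ s in S, w s * g s ∂μ := setLIntegral_mono' hS fun s hs => by gcongr; exact hg (hSt s hs)
    _ ≤ ∫⁻ s in T, w s * g s ∂μ := lintegral_mono_set hST

lemma lintegral_Ioo_half_one_weight_ge (A : ℝ × ℝ) (q : ℝ) :
    ENNReal.ofReal ((2 : ℝ) ^ (-|A.1 * q|) / 2) ≤
      ∫⁻ s in Ioo (1 / 2) 1, ENNReal.ofReal (s⁻¹ * ellA A s ^ q) := by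
  have hweight : ∀ s ∈ Ioo (1 / 2 : ℝ) 1,
      ENNReal.ofReal ((2 : ℝ) ^ (-|A.1 * q|)) ≤ ENNReal.ofReal (s⁻¹ * ellA A s ^ q) := by
    intro s hs
    have hs₀ : 0 < s := by linarith [hs.1]
    refine ENNReal.ofReal_le_ofReal ?_
    rw [ellA_rpow_of_le_one A q hs.2.le]
    calc (2 : ℝ) ^ (-|A.1 * q|) ≤ ell s ^ (A.1 * q) :=
          two_rpow_neg_abs_le_rpow (one_le_ell s) (ell_le_two hs.1.le hs.2.le) _
      _ ≤ s⁻¹ * ell s ^ (A.1 * q) :=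
          le_mul_of_one_le_left (Real.rpow_nonneg (by linarith [one_le_ell s]) _)
            ((one_le_inv₀ hs₀).2 hs.2.le)
  calc ENNReal.ofReal ((2 : ℝ) ^ (-|A.1 * q|) / 2)
      = ∫⁻ _ in Ioo (1 / 2 : ℝ) 1, ENNReal.ofReal ((2 : ℝ) ^ (-|A.1 * q|)) := by
        rw [setLIntegral_const, Real.volume_Ioo, ← ENNReal.ofReal_mul (by positivity)]
        congr 1
        ring
    _ ≤ _ := setLIntegral_mono' measurableSet_Ioo hweight

lemma lintegral_Ioo_one_weight {A : ℝ × ℝ} {q : ℝ} (hA : q * A.2 = -1) {t : ℝ} (ht : 1 ≤ t) :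
    ∫⁻ s in Ioo 1 t, ENNReal.ofReal (s⁻¹ * ellA A s ^ q) =
      ENNReal.ofReal (Real.log (1 + Real.log t)) := by
  rw [← lintegral_Ioo_inv_mul_inv_one_add_log ht]
  refine setLIntegral_congr_fun measurableSet_Ioo fun s hs => ?_
  rw [ellA_rpow_of_one_lt hA hs.1]

lemma log_one_add_log_nonneg {t : ℝ} (ht : 1 ≤ t) : 0 ≤ Real.log (1 + Real.log t) :=
  Real.log_nonneg (by linarith [Real.log_nonneg ht])

lemma elll_le {c t : ℝ} (hc₀ : 0 < c) (hc₁ : c ≤ 2) (ht : 1 ≤ t) :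
    elll t ≤ 2 / c * (c / 2 + Real.log (1 + Real.log t)) := by
  have hL := log_one_add_log_nonneg ht
  have h2c : 1 ≤ 2 / c := (one_le_div hc₀).2 hc₁
  have hcancel : 2 / c * (c / 2) = 1 := by field_simp
  rw [elll, ell_of_one_le ht, mul_add, hcancel]
  nlinarith

theorem pointwise_bound_limiting_lz_general (q : ℝ) (hq : 1 ≤ q) (A : ℝ × ℝ)
    (hA2 : q * A.2 = -1) :
    ∃ C : ℝ, 0 < C ∧ ∀ f : ℝ → ℝ≥0∞, Measurable f → ∀ t : ℝ, 1 ≤ t →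
      ENNReal.ofReal (elll t) * rearr μI f t ^ q ≤
        ENNReal.ofReal C *
          ∫⁻ s in Set.Ioi (0 : ℝ), ENNReal.ofReal (s⁻¹ * ellA A s ^ q) * rearr μI f s ^ q := by
  set c : ℝ := 2 ^ (-|A.1 * q|)
  have hc₀ : 0 < c := by positivity
  have hc₁ : c ≤ 2 := (Real.rpow_le_one_of_one_le_of_nonpos one_le_two
    (neg_nonpos.2 (abs_nonneg _))).trans one_le_two
  refine ⟨2 / c, by positivity, fun f _ t ht => ?_⟩
  set S := Ioo (1 / 2 : ℝ) 1 ∪ Ioo 1 t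
  have hweight : ENNReal.ofReal (c / 2) + ENNReal.ofReal (Real.log (1 + Real.log t)) ≤
      ∫⁻ s in S, ENNReal.ofReal (s⁻¹ * ellA A s ^ q) := by
    rw [lintegral_union measurableSet_Ioo (disjoint_left.2 fun _ h₁ h₂ => lt_asymm h₁.2 h₂.1),
      lintegral_Ioo_one_weight hA2 ht]
    gcongr
    exact lintegral_Ioo_half_one_weight_ge A q
  have hrearr : Antitone fun s => rearr μI f s ^ q := fun _ _ hst =>
    ENNReal.rpow_le_rpow (rearr_antitone μI f hst) (by linarith)
  have hS : S ⊆ Ioi 0 := union_subset (fun s hs => lt_trans (by norm_num) hs.1)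
    fun s hs => lt_trans one_pos hs.1
  have hSt : ∀ s ∈ S, s ≤ t := fun s hs => hs.elim (fun h => by linarith [h.2]) fun h => h.2.le
  calc ENNReal.ofReal (elll t) * rearr μI f t ^ q
      ≤ ENNReal.ofReal (2 / c) * (ENNReal.ofReal (c / 2) +
          ENNReal.ofReal (Real.log (1 + Real.log t))) * rearr μI f t ^ q := by
        rw [← ENNReal.ofReal_add (by positivity) (log_one_add_log_nonneg ht),
          ← ENNReal.ofReal_mul (by positivity)]
        gcongr
        exact elll_le hc₀ hc₁ ht
    _ ≤ ENNReal.ofReal (2 / c) * ((∫⁻ s in S, ENNReal.ofReal (s⁻¹ * ellA A s ^ q)) *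
          rearr μI f t ^ q) := by
        rw [mul_assoc]
        gcongr
    _ ≤ _ := by
        gcongr
        exact setLIntegral_mul_le_of_antitone hrearr (measurableSet_Ioo.union measurableSet_Ioo)
          hS hSt

/-- if `qα_∞ = -1` and `qα₀ < -1`, then
`ℓℓ(t) f^*(t)^q ≲ ‖f‖_{L^{∞,q,A}(0,∞)}^q` for `t ≥ 1`. -/
theorem pointwise_bound_limiting_lz (q : ℝ) (hq : 1 ≤ q) (A : ℝ × ℝ)
    (hA2 : q * A.2 = -1) (hA1 : q * A.1 < -1) :
    ∃ C : ℝ, 0 < C ∧ ∀ f : ℝ → ℝ≥0∞, Measurable f → ∀ t : ℝ, 1 ≤ t →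
      ENNReal.ofReal (elll t) * rearr μI f t ^ q ≤
        ENNReal.ofReal C *
          ∫⁻ s in Set.Ioi (0 : ℝ), ENNReal.ofReal (s⁻¹ * ellA A s ^ q) * rearr μI f s ^ q :=
  pointwise_bound_limiting_lz_general q hq A hA2

end
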